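/- arXiv:2207.06650 — 8 statements merged into one kernel-verified Lean document; each statement's English description precedes it below -/
import Mathlib

section
/- Let P ⊆ ℝ^n be a nonempty compact set and I ⊆ {1,…,n}. Suppose there is a finite index set J and nonempty compact sets P^j ⊆ ℝ^n (j ∈ J) such that: (i) for every j ∈ J and every i ∉ I there is c ∈ ℝ with x_i = c for all x ∈ P^j; (ii) ⋃_{j∈J} X(P^j) ⊆ P ⊆ ⋃_{j∈J} P^j; (iii) for every j ∈ J there is a finite family of hyper-rectangles (R_j^k)_{k∈K_j} with conv(P^j) = conv(⋃_{k∈K_j} R_j^k). Then for every function f : ℝ^n → ℝ that is convex in x_I, sup_{x∈P} f(x) = sup{ f(x) : x ∈ ⋃_{j∈J} X(P^j) } = sup{ f(x) : x ∈ ⋃_{j∈J} ⋃_{k∈K_j} R_j^k }. -/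
open Set


lemma Icc_eq_convexHull_vertices {n : ℕ} (a b : Fin n → ℝ) (h : a ≤ b) :
    Icc a b = convexHull ℝ (univ.pi fun i => ({a i, b i} : Set ℝ)) := by
  apply Subset.antisymm
  · intro x hx
    have := mem_convexHull_pi (𝕜 := ℝ) (s := (univ : Set (Fin n)))
      (t := fun i => ({a i, b i} : Set ℝ)) (x := x) ?_
    · simpa using this
    · intro i _
      rw [convexHull_pair, segment_eq_Icc (h i)]
      exact ⟨hx.1 i, hx.2 i⟩
  · apply convexHull_min _ (convex_Icc a b)
    intro v hv
    have hva : ∀ i, v i = a i ∨ v i = b i := by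
      intro i; simpa [mem_insert_iff, mem_singleton_iff] using hv i (mem_univ i)
    constructor <;> intro i <;> rcases hva i with h1 | h1 <;> rw [h1] <;>
      first | exact le_rfl | exact h i


/-- `f : ℝⁿ → ℝ` is *convex in the coordinates `I`*: for every fixed assignment `xb` of the
coordinates outside `I`, the restriction of `f` to the corresponding affine slice is convex. -/
def ConvexIn {n : ℕ} (I : Set (Fin n)) (f : (Fin n → ℝ) → ℝ) : Prop :=
  ∀ xb : Fin n → ℝ, ConvexOn ℝ {x : Fin n → ℝ | ∀ i ∉ I, x i = xb i} f

/-- `exPts S` is the set `X(S)` of extreme points of the convex hull of `S`. -/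
def exPts {n : ℕ} (S : Set (Fin n → ℝ)) : Set (Fin n → ℝ) :=
  (convexHull ℝ S).extremePoints ℝ

/-- Theorem 1 (rectangular decomposition): if a nonempty compact set `P ⊆ ℝⁿ` is sandwiched
between the extreme points of finitely many nonempty compact sets `Pj j` (each with the
coordinates outside `I` fixed) and their union, and each `conv (Pj j)` is the convex hull of a
finite union of hyper-rectangles, then for every `f` convex in `x_I` the suprema of `f` over
`P`, over the union of the extreme-point sets, and over the union of all the
hyper-rectangles coincide. -/
theorem stmt_0 {n : ℕ} (P : Set (Fin n → ℝ)) (hPne : P.Nonempty) (hPcomp : IsCompact P)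
    (I : Set (Fin n)) (J : Type) [Finite J]
    (Pj : J → Set (Fin n → ℝ))
    (hPjne : ∀ j, (Pj j).Nonempty) (hPjcomp : ∀ j, IsCompact (Pj j))
    (hfix : ∀ j, ∀ i ∉ I, ∃ c : ℝ, ∀ x ∈ Pj j, x i = c)
    (K : J → Type) [∀ j, Finite (K j)]
    (l u : (j : J) → K j → Fin n → ℝ)
    (hlu : ∀ j k, l j k ≤ u j k)
    (hrect : ∀ j, convexHull ℝ (Pj j) = convexHull ℝ (⋃ k, Icc (l j k) (u j k)))
    (hsub₁ : (⋃ j, exPts (Pj j)) ⊆ P) (hsub₂ : P ⊆ ⋃ j, Pj j)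
    (f : (Fin n → ℝ) → ℝ) (hf : ConvexIn I f) :
    sSup (f '' P) = sSup (f '' ⋃ j, exPts (Pj j)) ∧
    sSup (f '' P) = sSup (f '' ⋃ j, ⋃ k, Icc (l j k) (u j k)) := by
  classical
  -- notation
  obtain ⟨S, hS⟩ : ∃ S : J → Set (Fin n → ℝ), ∀ j, S j = ⋃ k, Icc (l j k) (u j k) :=
    ⟨_, fun _ => rfl⟩
  obtain ⟨C, hC⟩ : ∃ C : J → Set (Fin n → ℝ), ∀ j, C j = convexHull ℝ (Pj j) :=
    ⟨_, fun _ => rfl⟩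
  obtain ⟨Ex, hEx⟩ : ∃ Ex : J → Set (Fin n → ℝ), ∀ j, Ex j = exPts (Pj j) :=
    ⟨_, fun _ => rfl⟩
  obtain ⟨V, hV⟩ : ∃ V : J → Set (Fin n → ℝ),
      ∀ j, V j = ⋃ k, univ.pi fun i => ({l j k i, u j k i} : Set ℝ) := ⟨_, fun _ => rfl⟩
  simp only [← hS, ← hEx] at hsub₁ ⊢
  have hVfin : ∀ j, (V j).Finite := by
    intro j
    rw [hV j]
    exact finite_iUnion fun k => Set.Finite.pi fun i => (finite_singleton _).insert _
  -- C j = convexHull (V j)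
  have hCV : ∀ j, C j = convexHull ℝ (V j) := by
    intro j
    rw [hC j, hrect j, hV j]
    apply Subset.antisymm
    · apply convexHull_min _ (convex_convexHull ℝ _)
      apply iUnion_subset
      intro k
      rw [Icc_eq_convexHull_vertices _ _ (hlu j k)]
      exact convexHull_mono
        (subset_iUnion (fun k => univ.pi fun i => ({l j k i, u j k i} : Set ℝ)) k)
    · apply convexHull_mono
      apply iUnion_subset
      intro k
      refine subset_trans ?_ (subset_iUnion _ k)
      rw [Icc_eq_convexHull_vertices _ _ (hlu j k)]
      exact subset_convexHull ℝ _
  have hCcomp : ∀ j, IsCompact (C j) := by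
    intro j; rw [hCV j]; exact (hVfin j).isCompact_convexHull ℝ
  have hCconv : ∀ j, Convex ℝ (C j) := by intro j; rw [hC j]; exact convex_convexHull ℝ _
  have hExC : ∀ j, Ex j ⊆ C j := by intro j; rw [hEx j, hC j]; exact extremePoints_subset
  have hExV : ∀ j, Ex j ⊆ V j := by
    intro j
    have : Ex j = (convexHull ℝ (V j)).extremePoints ℝ := by
      rw [hEx j]; simp only [exPts]; rw [← hC j, hCV j]
    rw [this]
    exact extremePoints_convexHull_subset
  -- Minkowski: C j = convexHull (Ex j)
  have hMink : ∀ j, C j = convexHull ℝ (Ex j) := by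
    intro j
    have hfin : (Ex j).Finite := (hVfin j).subset (hExV j)
    have hcl : IsClosed (convexHull ℝ (Ex j)) := (hfin.isCompact_convexHull ℝ).isClosed
    have hExEq : Ex j = (C j).extremePoints ℝ := by
      rw [hEx j, hC j]; rfl
    have := closure_convexHull_extremePoints (hCcomp j) (hCconv j)
    rw [← hExEq, hcl.closure_eq] at this
    exact this.symm
  -- f is convex on each C j
  have hfC : ∀ j, ConvexOn ℝ (C j) f := by
    intro j
    set xb : Fin n → ℝ :=
      fun i => if h : i ∈ I then 0 else Classical.choose (hfix j i h) with hxb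
    have hslice : Pj j ⊆ {x : Fin n → ℝ | ∀ i ∉ I, x i = xb i} := by
      intro x hx i hi
      rw [hxb]
      simp only [hi, dif_neg]
      exact Classical.choose_spec (hfix j i hi) x hx
    have hconvslice : Convex ℝ {x : Fin n → ℝ | ∀ i ∉ I, x i = xb i} := by
      intro x hx y hy a b ha hb hab
      intro i hi
      simp only [Pi.add_apply, Pi.smul_apply, smul_eq_mul]
      rw [hx i hi, hy i hi, ← add_mul, hab, one_mul]
    have hCs : C j ⊆ {x : Fin n → ℝ | ∀ i ∉ I, x i = xb i} := by
      rw [hC j]; exact convexHull_min hslice hconvslice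
    exact (hf xb).subset hCs (hCconv j)
  -- key maximum principle on each C j
  have key : ∀ j, ∀ x ∈ C j, ∃ e ∈ Ex j, f x ≤ f e := by
    intro j x hx
    rw [hMink j] at hx
    exact (hfC j).exists_ge_of_mem_convexHull (hExC j) hx
  have keyS : ∀ j, ∀ x ∈ C j, ∃ y ∈ S j, f x ≤ f y := by
    intro j x hx
    rw [hC j, hrect j, ← hS j] at hx
    refine (hfC j).exists_ge_of_mem_convexHull ?_ hx
    rw [hC j, hrect j, ← hS j]
    exact subset_convexHull ℝ _
  -- global bound
  have hVUfin : (⋃ j, V j).Finite := finite_iUnion hVfin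
  have hfVfin : (f '' ⋃ j, V j).Finite := hVUfin.image f
  set M : ℝ := sSup (f '' ⋃ j, V j) with hM
  have bddV : BddAbove (f '' ⋃ j, V j) := hfVfin.bddAbove
  have hboundC : ∀ j, ∀ x ∈ C j, f x ≤ M := by
    intro j x hx
    obtain ⟨e, he, hfe⟩ := key j x hx
    refine hfe.trans (le_csSup bddV ?_)
    exact mem_image_of_mem f (mem_iUnion.2 ⟨j, hExV j he⟩)
  have hPC : ∀ x ∈ P, ∃ j, x ∈ C j := by
    intro x hx
    obtain ⟨j, hj⟩ := mem_iUnion.1 (hsub₂ hx)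
    refine ⟨j, ?_⟩; rw [hC j]; exact subset_convexHull ℝ _ hj
  have hSC : ∀ j, S j ⊆ C j := by
    intro j
    rw [hC j, hrect j, ← hS j]
    exact subset_convexHull ℝ _
  -- the three image sets
  set A := f '' P with hA
  set B := f '' ⋃ j, Ex j with hB
  set D := f '' ⋃ j, S j with hD
  have hBA : B ⊆ A := image_mono (f := f) hsub₁
  have bddA : BddAbove A := by
    refine ⟨M, ?_⟩
    rintro _ ⟨x, hx, rfl⟩
    obtain ⟨j, hj⟩ := hPC x hx
    exact hboundC j x hj
  have bddD : BddAbove D := by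
    refine ⟨M, ?_⟩
    rintro _ ⟨x, hx, rfl⟩
    obtain ⟨j, hj⟩ := mem_iUnion.1 hx
    exact hboundC j x (hSC j hj)
  have bddB : BddAbove B := bddA.mono hBA
  have neA : A.Nonempty := hPne.image f
  obtain ⟨x₀, hx₀⟩ := hPne
  obtain ⟨j₀, hj₀⟩ := mem_iUnion.1 (hsub₂ hx₀)
  have hCne : (C j₀).Nonempty := by rw [hC j₀]; exact (hPjne j₀).mono (subset_convexHull ℝ _)
  have neB : B.Nonempty := by
    obtain ⟨y, hy⟩ := hCne
    obtain ⟨e, he, _⟩ := key j₀ y hy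
    exact ⟨f e, mem_image_of_mem f (mem_iUnion.2 ⟨j₀, he⟩)⟩
  have neD : D.Nonempty := by
    obtain ⟨y, hy⟩ := hCne
    obtain ⟨z, hz, _⟩ := keyS j₀ y hy
    exact ⟨f z, mem_image_of_mem f (mem_iUnion.2 ⟨j₀, hz⟩)⟩
  -- the inequalities
  have ineq1 : sSup A ≤ sSup D := by
    refine csSup_le neA ?_
    rintro _ ⟨x, hx, rfl⟩
    obtain ⟨j, hj⟩ := hPC x hx
    obtain ⟨y, hy, hfy⟩ := keyS j x hj
    exact hfy.trans (le_csSup bddD (mem_image_of_mem f (mem_iUnion.2 ⟨j, hy⟩)))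
  have ineq2 : sSup D ≤ sSup B := by
    refine csSup_le neD ?_
    rintro _ ⟨x, hx, rfl⟩
    obtain ⟨j, hj⟩ := mem_iUnion.1 hx
    obtain ⟨e, he, hfe⟩ := key j x (hSC j hj)
    exact hfe.trans (le_csSup bddB (mem_image_of_mem f (mem_iUnion.2 ⟨j, he⟩)))
  have ineq3 : sSup B ≤ sSup A := csSup_le_csSup bddA neB hBA
  exact ⟨le_antisymm (ineq1.trans ineq2) ineq3,
    le_antisymm ineq1 (ineq2.trans ineq3)⟩
end

section
/- Let I ⊆ {1,…,n}, let J be a finite index set, and let P^j ⊆ ℝ^n (j ∈ J) be nonempty compact sets such that: (i) for every j ∈ J and every i ∉ I there is c ∈ ℝ with x_i = c for all x ∈ P^j; and (iii) for every j ∈ J there is a finite family of hyper-rectangles (R_j^k)_{k∈K_j} with conv(P^j) = conv(⋃_{k∈K_j} R_j^k). Then for every function f : ℝ^n → ℝ that is convex in x_I, sup{ f(x) : x ∈ ⋃_{j∈J} X(P^j) } = sup{ f(x) : x ∈ ⋃_{j∈J} ⋃_{k∈K_j} R_j^k }. -/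
open Set

-- sup lemma
lemma sup_aux (A B : Set ℝ) (hAB : A ⊆ B) (h : ∀ b ∈ B, ∃ a ∈ A, b ≤ a) :
    sSup A = sSup B := by
  rcases A.eq_empty_or_nonempty with rfl | hA
  · have : B = ∅ := eq_empty_iff_forall_notMem.2 fun b hb => by
      obtain ⟨a, ha, _⟩ := h b hb; exact ha
    rw [this]
  · have hB : B.Nonempty := hA.mono hAB
    by_cases hbdd : BddAbove B
    · refine le_antisymm (csSup_le_csSup hbdd hA hAB) (csSup_le hB fun b hb => ?_)
      obtain ⟨a, ha, hba⟩ := h b hb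
      exact hba.trans (le_csSup (hbdd.mono hAB) ha)
    · have hbddA : ¬ BddAbove A := by
        rintro ⟨M, hM⟩
        exact hbdd ⟨M, fun b hb => by
          obtain ⟨a, ha, hba⟩ := h b hb; exact hba.trans (hM ha)⟩
      rw [Real.sSup_of_not_bddAbove hbddA, Real.sSup_of_not_bddAbove hbdd]

-- compactness of convex hull of compact set in finite dimensions
lemma aux_compact_hull {n : ℕ} {s : Set (Fin n → ℝ)} (hs : IsCompact s) :
    IsCompact (convexHull ℝ s) := by
  classical
  rcases s.eq_empty_or_nonempty with rfl | ⟨p, hp⟩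
  · simp
  set d := Module.finrank ℝ (Fin n → ℝ) + 1 with hd
  have hK : IsCompact ((stdSimplex ℝ (Fin d)) ×ˢ (Set.univ.pi fun _ : Fin d => s)) :=
    (isCompact_stdSimplex (𝕜 := ℝ) (ι := Fin d)).prod (isCompact_univ_pi fun _ => hs)
  have hg : Continuous fun wz : (Fin d → ℝ) × (Fin d → Fin n → ℝ) => ∑ i, wz.1 i • wz.2 i := by
    exact continuous_finset_sum _ fun i _ =>
      ((continuous_apply i).comp continuous_fst).smul ((continuous_apply i).comp continuous_snd)
  have himage : (fun wz : (Fin d → ℝ) × (Fin d → Fin n → ℝ) => ∑ i, wz.1 i • wz.2 i) ''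
      ((stdSimplex ℝ (Fin d)) ×ˢ (Set.univ.pi fun _ : Fin d => s)) = convexHull ℝ s := by
    apply Subset.antisymm
    · rintro _ ⟨⟨w, z⟩, ⟨hw, hz⟩, rfl⟩
      show ∑ i, w i • z i ∈ convexHull ℝ s
      have h1 : (Finset.univ : Finset (Fin d)).centerMass w z = ∑ i, w i • z i :=
        Finset.centerMass_eq_of_sum_1 _ _ hw.2
      rw [← h1]
      exact Finset.centerMass_mem_convexHull _ (fun i _ => hw.1 i)
        (by rw [hw.2]; exact one_pos) (fun i _ => hz i (mem_univ i))
    · intro x hx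
      obtain ⟨ι, hι, z, w, hzs, hai, hw0, hw1, hxx⟩ := eq_pos_convex_span_of_mem_convexHull hx
      letI := hι
      have hcard : Fintype.card ι ≤ d := hai.card_le_finrank_succ.trans (add_le_add_left (Submodule.finrank_le _) 1)
      obtain ⟨e⟩ : Nonempty (ι ↪ Fin d) :=
        Function.Embedding.nonempty_of_card_le (by simpa using hcard)
      let w' : Fin d → ℝ := fun j => ∑ i ∈ Finset.univ.filter fun i => e i = j, w i
      let z' : Fin d → Fin n → ℝ := fun j => if h : ∃ i, e i = j then z h.choose else p
      have hz'e : ∀ i, z' (e i) = z i := by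
        intro i
        have h : ∃ i', e i' = e i := ⟨i, rfl⟩
        simp only [z', dif_pos h]
        exact congrArg z (e.injective h.choose_spec)
      have hfib : ∀ (g : ι → ℝ), ∑ j, ∑ i ∈ Finset.univ.filter fun i => e i = j, g i = ∑ i, g i :=
        fun g => Finset.sum_fiberwise_of_maps_to (fun i _ => Finset.mem_univ _) g
      refine ⟨(w', z'), ⟨⟨fun j => Finset.sum_nonneg fun i _ => (hw0 i).le, ?_⟩, ?_⟩, ?_⟩
      · rw [hfib w, hw1]
      · intro j _
        by_cases h : ∃ i, e i = j
        · simp only [z', dif_pos h]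
          exact hzs ⟨h.choose, rfl⟩
        · simp only [z', dif_neg h]
          exact hp
      · calc ∑ j, w' j • z' j
            = ∑ j, ∑ i ∈ Finset.univ.filter fun i => e i = j, w i • z' j := by
              simp only [w', Finset.sum_smul]
          _ = ∑ j, ∑ i ∈ Finset.univ.filter fun i => e i = j, w i • z i := by
              refine Finset.sum_congr rfl fun j _ => Finset.sum_congr rfl fun i hi => ?_
              rw [Finset.mem_filter] at hi
              rw [← hi.2, hz'e]
          _ = ∑ i, w i • z i :=
              Finset.sum_fiberwise_of_maps_to (fun i _ => Finset.mem_univ _) _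
          _ = x := hxx
  rw [← himage]
  exact hK.image hg

-- maximum principle for convex functions on compact convex sets: dominated at extreme point
lemma aux_max {n : ℕ} {D : Set (Fin n → ℝ)} (hD : IsCompact D)
    {f : (Fin n → ℝ) → ℝ} (hf : ConvexOn ℝ D f) (hcont : ContinuousOn f D)
    {x : Fin n → ℝ} (hx : x ∈ D) : ∃ y ∈ D.extremePoints ℝ, f x ≤ f y := by
  obtain ⟨z, hzD, hz⟩ := hD.exists_isMaxOn ⟨x, hx⟩ hcont
  have hzmax : ∀ w ∈ D, f w ≤ f z := isMaxOn_iff.mp hz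
  set M : Set (Fin n → ℝ) := D ∩ f ⁻¹' (Ici (f z)) with hM
  have hMclosed : IsClosed M := hcont.preimage_isClosed_of_isClosed hD.isClosed isClosed_Ici
  have hMcomp : IsCompact M := hD.of_isClosed_subset hMclosed inter_subset_left
  have hext : IsExtreme ℝ D M := by
    refine ⟨inter_subset_left, ?_⟩
    rintro x₁ hx₁ x₂ hx₂ v ⟨hvD, hvf⟩ hv
    obtain ⟨a, b, ha, hb, hab, rfl⟩ := hv
    have h1 : f x₁ ≤ f z := hzmax _ hx₁
    have h2 : f x₂ ≤ f z := hzmax _ hx₂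
    have hcvx : f (a • x₁ + b • x₂) ≤ a * f x₁ + b * f x₂ := hf.2 hx₁ hx₂ ha.le hb.le hab
    have hvz : f z ≤ f (a • x₁ + b • x₂) := hvf
    have h3 : f z ≤ a * f x₁ + b * f x₂ := hvz.trans hcvx
    have hid1 : a * f z + b * f z = f z := by
      calc a * f z + b * f z = (a + b) * f z := by ring
        _ = f z := by rw [hab, one_mul]
    have h4 : b * f x₂ ≤ b * f z := mul_le_mul_of_nonneg_left h2 hb.le
    have h4' : a * f x₁ ≤ a * f z := mul_le_mul_of_nonneg_left h1 ha.le
    have h5 : a * f z ≤ a * f x₁ := by linarith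
    have h5' : b * f z ≤ b * f x₂ := by linarith
    · exact ⟨hx₁, by simp only [mem_preimage, mem_Ici]
                     exact (mul_le_mul_iff_right₀ ha).mp h5⟩
  have hzM : z ∈ M := ⟨hzD, by simp only [mem_preimage, mem_Ici, le_refl]⟩
  obtain ⟨y, hy⟩ := hMcomp.extremePoints_nonempty ⟨z, hzM⟩
  exact ⟨y, hext.extremePoints_subset_extremePoints hy,
    (hzmax _ hx).trans hy.1.2⟩

-- continuity of f on a slice
lemma aux_cont {n : ℕ} {I : Set (Fin n)} {f : (Fin n → ℝ) → ℝ} (hf : ConvexIn I f)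
    (xb : Fin n → ℝ) : ContinuousOn f {x : Fin n → ℝ | ∀ i ∉ I, x i = xb i} := by
  classical
  set φ : (Fin n → ℝ) → (Fin n → ℝ) := fun x i => if i ∈ I then x i else xb i with hφ
  have hφc : Continuous φ := continuous_pi fun i => by
    by_cases h : i ∈ I
    · simpa [φ, h] using continuous_apply i
    · simpa [φ, h] using continuous_const
  have hmem : ∀ x, φ x ∈ {x : Fin n → ℝ | ∀ i ∉ I, x i = xb i} := by
    intro x i hi; simp [φ, hi]
  have hgconv : ConvexOn ℝ (univ : Set (Fin n → ℝ)) (f ∘ φ) := by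
    refine ⟨convex_univ, fun x _ y _ a b ha hb hab => ?_⟩
    have key : φ (a • x + b • y) = a • φ x + b • φ y := by
      funext i
      by_cases h : i ∈ I
      · simp [φ, h]
      · simp only [φ, h, if_false, Pi.add_apply, Pi.smul_apply, smul_eq_mul]
        linear_combination (-(xb i)) * hab
    show f (φ (a • x + b • y)) ≤ a * f (φ x) + b * f (φ y)
    rw [key]
    exact (hf xb).2 (hmem x) (hmem y) ha hb hab
  have hgcont : ContinuousOn (f ∘ φ) univ := ConvexOn.continuousOn isOpen_univ hgconv
  refine (hgcont.mono (subset_univ _)).congr ?_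
  intro x hx
  have : φ x = x := by
    funext i
    by_cases h : i ∈ I
    · simp [φ, h]
    · simp [φ, h, hx i h]
  simp [Function.comp, this]

/-- First part of the proof of Theorem 1: given finitely many nonempty compact sets `Pj j`,
each with the coordinates outside `I` fixed, and each with `conv (Pj j)` equal to the convex
hull of a finite union of hyper-rectangles, for every `f` convex in `x_I` the supremum of `f`
over the union of the extreme-point sets `X(Pj j)` equals its supremum over the union of all
the hyper-rectangles. -/
theorem stmt_1 {n : ℕ} (I : Set (Fin n)) (J : Type) [Finite J]
    (Pj : J → Set (Fin n → ℝ))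
    (hPjne : ∀ j, (Pj j).Nonempty) (hPjcomp : ∀ j, IsCompact (Pj j))
    (hfix : ∀ j, ∀ i ∉ I, ∃ c : ℝ, ∀ x ∈ Pj j, x i = c)
    (K : J → Type) [∀ j, Finite (K j)]
    (l u : (j : J) → K j → Fin n → ℝ)
    (hlu : ∀ j k, l j k ≤ u j k)
    (hrect : ∀ j, convexHull ℝ (Pj j) = convexHull ℝ (⋃ k, Icc (l j k) (u j k)))
    (f : (Fin n → ℝ) → ℝ) (hf : ConvexIn I f) :
    sSup (f '' ⋃ j, exPts (Pj j)) = sSup (f '' ⋃ j, ⋃ k, Icc (l j k) (u j k)) := by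
  classical
  -- the fixed values of the coordinates outside I, for each j
  set xb : J → Fin n → ℝ := fun j i => if h : i ∈ I then 0 else (hfix j i h).choose with hxb
  have hPsub : ∀ j, Pj j ⊆ {x : Fin n → ℝ | ∀ i ∉ I, x i = xb j i} := by
    intro j x hx i hi
    rw [hxb]
    simp only [dif_neg hi]
    exact (hfix j i hi).choose_spec x hx
  have hhull : ∀ j, convexHull ℝ (Pj j) ⊆ {x : Fin n → ℝ | ∀ i ∉ I, x i = xb j i} :=
    fun j => convexHull_min (hPsub j) (hf (xb j)).1
  have hDcomp : ∀ j, IsCompact (convexHull ℝ (Pj j)) := fun j => aux_compact_hull (hPjcomp j)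
  have hfD : ∀ j, ConvexOn ℝ (convexHull ℝ (Pj j)) f :=
    fun j => (hf (xb j)).subset (hhull j) (convex_convexHull ℝ _)
  have hcontD : ∀ j, ContinuousOn f (convexHull ℝ (Pj j)) :=
    fun j => (aux_cont hf (xb j)).mono (hhull j)
  apply sup_aux
  · -- ⋃ exPts ⊆ ⋃ rectangles
    apply image_mono
    intro x hx
    rw [mem_iUnion] at hx ⊢
    obtain ⟨j, hx⟩ := hx
    refine ⟨j, ?_⟩
    rw [exPts, hrect j] at hx
    exact extremePoints_convexHull_subset hx
  · -- every value over the rectangles is dominated by a value at an extreme point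
    rintro _ ⟨x, hx, rfl⟩
    rw [mem_iUnion] at hx
    obtain ⟨j, hx⟩ := hx
    have hxD : x ∈ convexHull ℝ (Pj j) := by
      rw [hrect j]
      exact subset_convexHull ℝ _ hx
    obtain ⟨y, hy, hxy⟩ := aux_max (hDcomp j) (hfD j) (hcontD j) hxD
    exact ⟨f y, mem_image_of_mem f (mem_iUnion.mpr ⟨j, hy⟩), hxy⟩
end

section
/- Let P ⊆ ℝ^n be a nonempty compact set and I ⊆ {1,…,n}. Suppose there is a finite family of hyper-rectangles R^j = ∏_{k=1}^n [l_k^j, u_k^j] (j ∈ J, J finite) such that: (i) l_i^j = u_i^j for all i ∉ I and all j ∈ J; and (ii) ⋃_{j∈J} X(R^j) ⊆ P ⊆ ⋃_{j∈J} R^j, where X(R^j) is the (finite) set of vertices of R^j. Then for every function f : ℝ^n → ℝ that is convex in x_I, sup_{x∈P} f(x) = sup{ f(x) : x ∈ ⋃_{j∈J} X(R^j) } = sup{ f(x) : x ∈ ⋃_{j∈J} R^j }. -/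
open Set

lemma aux_comb {x x₁ x₂ c₁ c₂ : ℝ} (h1 : x ≤ x₁) (h2 : x ≤ x₂) (hc₁ : 0 < c₁) (hc₂ : 0 < c₂)
    (hsum : c₁ + c₂ = 1) (heq : c₁ * x₁ + c₂ * x₂ = x) : x₁ = x ∧ x₂ = x := by
  have hxx : c₁ * x + c₂ * x = x := by rw [← add_mul, hsum, one_mul]
  constructor
  · by_contra hc
    have hx : x < x₁ := lt_of_le_of_ne h1 (Ne.symm hc)
    nlinarith [mul_pos hc₁ (sub_pos.2 hx), mul_nonneg hc₂.le (sub_nonneg.2 h2)]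
  · by_contra hc
    have hx : x < x₂ := lt_of_le_of_ne h2 (Ne.symm hc)
    nlinarith [mul_pos hc₂ (sub_pos.2 hx), mul_nonneg hc₁.le (sub_nonneg.2 h1)]

lemma extremePoints_Icc_real {a b : ℝ} (hab : a ≤ b) :
    (Icc a b).extremePoints ℝ = {a, b} := by
  ext x
  simp only [mem_extremePoints, mem_Icc, mem_insert_iff, mem_singleton_iff]
  constructor
  · rintro ⟨⟨hax, hxb⟩, h⟩
    by_contra hc
    push_neg at hc
    have hax' : a < x := lt_of_le_of_ne hax (Ne.symm hc.1)
    have hxb' : x < b := lt_of_le_of_ne hxb hc.2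
    have : x ∈ openSegment ℝ a b := by
      rw [openSegment_eq_Ioo (hax'.trans hxb')]
      exact ⟨hax', hxb'⟩
    exact hc.1 (h a ⟨le_refl a, hab⟩ b ⟨hab, le_refl b⟩ this).1.symm
  · rintro (rfl | rfl)
    · refine ⟨⟨le_refl x, hab⟩, ?_⟩
      rintro x₁ ⟨h1, _⟩ x₂ ⟨h2, _⟩ ⟨c₁, c₂, hc₁, hc₂, hsum, heq⟩
      simp only [smul_eq_mul] at heq
      exact aux_comb h1 h2 hc₁ hc₂ hsum heq
    · refine ⟨⟨hab, le_refl x⟩, ?_⟩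
      rintro x₁ ⟨_, h1⟩ x₂ ⟨_, h2⟩ ⟨c₁, c₂, hc₁, hc₂, hsum, heq⟩
      simp only [smul_eq_mul] at heq
      have := aux_comb (neg_le_neg h1) (neg_le_neg h2) hc₁ hc₂ hsum (by ring_nf; linarith)
      constructor <;> linarith [this.1, this.2]

/-- The vertex set of a hyper-rectangle, and the convex hull of the vertex set. -/
lemma aux_rect {n : ℕ} (l u : Fin n → ℝ) (hlu : l ≤ u) :
    exPts (Icc l u) = univ.pi (fun i => ({l i, u i} : Set ℝ)) ∧
    convexHull ℝ (univ.pi (fun i => ({l i, u i} : Set ℝ))) = Icc l u := by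
  have hIcc : Icc l u = univ.pi (fun i => Icc (l i) (u i)) := (pi_univ_Icc l u).symm
  constructor
  · unfold exPts
    rw [(convex_Icc l u).convexHull_eq, hIcc, extremePoints_pi]
    have h : ∀ i, (Icc (l i) (u i)).extremePoints ℝ = ({l i, u i} : Set ℝ) := fun i =>
      extremePoints_Icc_real (hlu i)
    simp only [h]
  · rw [convexHull_pi, hIcc]
    have h : ∀ i, convexHull ℝ ({l i, u i} : Set ℝ) = Icc (l i) (u i) := fun i => by
      rw [convexHull_pair, segment_eq_Icc (hlu i)]
    simp only [h]

/-- Lemma 1: if a nonempty compact set `P ⊆ ℝⁿ` is sandwiched between the vertices of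
finitely many hyper-rectangles `Rʲ = ∏ₖ [l j k, u j k]` (degenerate in every coordinate
outside `I`) and their union, then for every `f` convex in `x_I` the suprema of `f` over
`P`, over the union of the vertex sets, and over the union of the rectangles coincide. -/
theorem stmt_3 {n : ℕ} (P : Set (Fin n → ℝ)) (hPne : P.Nonempty) (hPcomp : IsCompact P)
    (I : Set (Fin n)) (J : Type) [Finite J]
    (l u : J → Fin n → ℝ) (hlu : ∀ j, l j ≤ u j)
    (hfix : ∀ j, ∀ i ∉ I, l j i = u j i)
    (hsub₁ : (⋃ j, exPts (Icc (l j) (u j))) ⊆ P)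
    (hsub₂ : P ⊆ ⋃ j, Icc (l j) (u j))
    (f : (Fin n → ℝ) → ℝ) (hf : ConvexIn I f) :
    sSup (f '' P) = sSup (f '' ⋃ j, exPts (Icc (l j) (u j))) ∧
    sSup (f '' P) = sSup (f '' ⋃ j, Icc (l j) (u j)) := by
  have hex : ∀ j, exPts (Icc (l j) (u j)) = univ.pi (fun i => ({l j i, u j i} : Set ℝ)) :=
    fun j => (aux_rect (l j) (u j) (hlu j)).1
  have hch : ∀ j, convexHull ℝ (univ.pi (fun i => ({l j i, u j i} : Set ℝ))) = Icc (l j) (u j) :=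
    fun j => (aux_rect (l j) (u j) (hlu j)).2
  -- the union of the vertex sets is finite and nonempty
  have hVfin : (⋃ j, exPts (Icc (l j) (u j))).Finite := by
    refine Set.finite_iUnion fun j => ?_
    rw [hex j]
    exact Set.Finite.pi fun i => (Set.finite_singleton _).insert _
  have hVne : (⋃ j, exPts (Icc (l j) (u j))).Nonempty := by
    obtain ⟨x, hx⟩ := hPne
    obtain ⟨j, hj⟩ := mem_iUnion.1 (hsub₂ hx)
    refine ⟨l j, mem_iUnion.2 ⟨j, ?_⟩⟩
    rw [hex j]
    intro i _
    exact mem_insert _ _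
  set M := sSup (f '' ⋃ j, exPts (Icc (l j) (u j))) with hM
  have hbdd : BddAbove (f '' ⋃ j, exPts (Icc (l j) (u j))) := (hVfin.image f).bddAbove
  -- maximum principle on each rectangle
  have hkey : ∀ j, ∀ x ∈ Icc (l j) (u j), ∃ y ∈ exPts (Icc (l j) (u j)), f x ≤ f y := by
    intro j x hx
    have hslice := hf (l j)
    have hts : univ.pi (fun i => ({l j i, u j i} : Set ℝ)) ⊆
        {z : Fin n → ℝ | ∀ i ∉ I, z i = l j i} := by
      intro y hy i hi
      rcases hy i (mem_univ i) with h | h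
      · exact h
      · rw [mem_singleton_iff] at h
        rw [h]
        exact (hfix j i hi).symm
    have hxch : x ∈ convexHull ℝ (univ.pi (fun i => ({l j i, u j i} : Set ℝ))) := by
      rw [hch j]; exact hx
    obtain ⟨y, hy, hfxy⟩ := hslice.exists_ge_of_mem_convexHull hts hxch
    exact ⟨y, by rw [hex j]; exact hy, hfxy⟩
  -- every value of f on the union of the rectangles is at most M
  have hub : ∀ x ∈ ⋃ j, Icc (l j) (u j), f x ≤ M := by
    intro x hx
    obtain ⟨j, hj⟩ := mem_iUnion.1 hx
    obtain ⟨y, hy, hfxy⟩ := hkey j x hj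
    exact hfxy.trans (le_csSup hbdd (mem_image_of_mem f (mem_iUnion.2 ⟨j, hy⟩)))
  have hbddP : BddAbove (f '' P) := ⟨M, by rintro _ ⟨x, hx, rfl⟩; exact hub x (hsub₂ hx)⟩
  have h1 : sSup (f '' P) = M := by
    refine le_antisymm ?_ ?_
    · exact csSup_le (hPne.image f) (by rintro _ ⟨x, hx, rfl⟩; exact hub x (hsub₂ hx))
    · exact csSup_le_csSup hbddP (hVne.image f) (image_mono (f := f) hsub₁)
  refine ⟨h1, le_antisymm ?_ ?_⟩
  · refine csSup_le_csSup ⟨M, ?_⟩ (hPne.image f) (image_mono (f := f) hsub₂)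
    rintro _ ⟨x, hx, rfl⟩
    exact hub x hx
  · rw [h1]
    exact csSup_le ((hPne.mono hsub₂).image f) (by rintro _ ⟨x, hx, rfl⟩; exact hub x hx)
end

section
/- Let P ⊆ ℝ^n be a nonempty compact set, I ⊆ {1,…,n}, and Q ⊆ ℝ^n a finite set such that sup_{x∈P} f(x) = sup_{x∈Q} f(x) for every function f : ℝ^n → ℝ that is convex in x_I. Then the projections of P and Q onto the coordinates outside I coincide: { x_{N∖I} : x ∈ P } = { x_{N∖I} : x ∈ Q }, where N = {1,…,n} and x_{N∖I} denotes the vector of coordinates x_i for i ∉ I. In particular, the projection of P onto the coordinates outside I is a finite set. -/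
/-!
A function of the coordinates outside `I` alone is convex in `x_I`. Applying the hypothesis
to `x ↦ -dist (x_{N∖I}, a)` shows that `a` is a projection of a point of `P` iff it is a
projection of a point of `Q`, because over a compact set this supremum is attained and
vanishes exactly when `a` is hit. As `sSup ∅ = 0`, the constant `1` rules out `Q = ∅`.
-/

open Set

lemma convex_setOf_forall_notMem_eq {n : ℕ} (I : Set (Fin n)) (xb : Fin n → ℝ) :
    Convex ℝ {x : Fin n → ℝ | ∀ i ∉ I, x i = xb i} := by
  have hpi : {x : Fin n → ℝ | ∀ i ∉ I, x i = xb i} = Set.pi Iᶜ fun i => {xb i} := by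
    ext x
    simp [Set.mem_pi]
  rw [hpi]
  exact convex_pi fun i _ => convex_singleton _

lemma convexIn_comp_proj {n : ℕ} (I : Set (Fin n)) (g : ({i : Fin n // i ∉ I} → ℝ) → ℝ) :
    ConvexIn I fun x => g fun i => x i.1 := by
  intro xb
  refine (convexOn_const (g fun i => xb i.1) (convex_setOf_forall_notMem_eq I xb)).congr ?_
  intro x hx
  simp only [show (fun i : {i : Fin n // i ∉ I} => x i.1) = fun i => xb i.1 from
    funext fun i => hx i.1 i.2]

lemma IsCompact.mem_iff_sSup_neg_dist_eq_zero {Y : Type*} [MetricSpace Y] {T : Set Y}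
    (hT : IsCompact T) (hne : T.Nonempty) (a : Y) :
    a ∈ T ↔ sSup ((fun y => -dist y a) '' T) = 0 := by
  have hbdd : BddAbove ((fun y => -dist y a) '' T) :=
    ⟨0, by rintro _ ⟨y, -, rfl⟩; exact neg_nonpos.2 dist_nonneg⟩
  have hcont : Continuous fun y : Y => -dist y a := (continuous_id.dist continuous_const).neg
  obtain ⟨y₀, hy₀, hmax⟩ := (hT.image hcont).sSup_mem (hne.image _)
  rw [← hmax, neg_eq_zero, dist_eq_zero]
  constructor
  · intro ha
    have hle := le_csSup hbdd (mem_image_of_mem (fun y => -dist y a) ha)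
    rw [← hmax, dist_self, neg_zero, neg_nonneg] at hle
    exact dist_le_zero.1 hle
  · rintro rfl
    exact hy₀

/-- If a nonempty compact set `P ⊆ ℝⁿ` shares its supremum with a finite set `Q` for every
function convex in `x_I`, then the projections of `P` and `Q` onto the coordinates outside
`I` coincide; in particular the projection of `P` onto the coordinates outside `I` is
finite. -/
theorem stmt_5 {n : ℕ} (P : Set (Fin n → ℝ)) (hPne : P.Nonempty) (hPcomp : IsCompact P)
    (I : Set (Fin n)) (Q : Set (Fin n → ℝ)) (hQfin : Q.Finite)
    (hsup : ∀ f : (Fin n → ℝ) → ℝ, ConvexIn I f → sSup (f '' P) = sSup (f '' Q)) :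
    (fun (x : Fin n → ℝ) (i : {i : Fin n // i ∉ I}) => x i.1) '' P
      = (fun (x : Fin n → ℝ) (i : {i : Fin n // i ∉ I}) => x i.1) '' Q ∧
    ((fun (x : Fin n → ℝ) (i : {i : Fin n // i ∉ I}) => x i.1) '' P).Finite := by
  classical
  set π : (Fin n → ℝ) → ({i : Fin n // i ∉ I} → ℝ) := fun x i => x i.1
  have hπ : Continuous π := continuous_pi fun i => continuous_apply i.1
  have hQne : Q.Nonempty := by
    by_contra! hQ
    have h := hsup (fun _ => 1) (convexIn_comp_proj I fun _ => 1)
    simp [hQ, hPne.image_const] at h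
  have himage : π '' P = π '' Q := by
    ext a
    have hsupa := hsup (fun x => -dist (π x) a) (convexIn_comp_proj I fun y => -dist y a)
    rw [← image_image (fun y => -dist y a) π P, ← image_image (fun y => -dist y a) π Q] at hsupa
    rw [(hPcomp.image hπ).mem_iff_sSup_neg_dist_eq_zero (hPne.image π),
      (hQfin.isCompact.image hπ).mem_iff_sSup_neg_dist_eq_zero (hQne.image π), hsupa]
  exact ⟨himage, himage ▸ hQfin.image π⟩
end

section
/- Let P ⊆ ℝ^n be a nonempty compact set, I ⊆ {1,…,n}, and Q ⊆ ℝ^n a finite set such that sup_{x∈P} f(x) = sup_{x∈Q} f(x) for every function f : ℝ^n → ℝ that is convex in x_I. For x̄ in the projection of P onto the coordinates outside I, let P(x̄) = P ∩ {x ∈ ℝ^n : x_i = x̄_i for all i ∉ I}. Then every extreme point of conv(P(x̄)) belongs to Q; in particular, the set of extreme points of conv(P(x̄)) is finite. -/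
open Set

lemma dite_sum_aux {M : Type*} [AddCommMonoid M] {k m : ℕ} (hk : k ≤ m) (F : Fin k → M) :
    (∑ i : Fin m, if h : (i : ℕ) < k then F ⟨i, h⟩ else 0) = ∑ j : Fin k, F j := by
  rw [Fin.sum_univ_eq_sum_range (fun i => if h : i < k then F ⟨i, h⟩ else 0) m]
  rw [show (∑ j : Fin k, F j) =
      ∑ i : Fin k, (fun i => if h : i < k then F ⟨i, h⟩ else 0) (i : ℕ) by
    apply Finset.sum_congr rfl; intro i _; simp [i.isLt]]
  rw [Fin.sum_univ_eq_sum_range (fun i => if h : i < k then F ⟨i, h⟩ else 0) k]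
  exact (Finset.sum_subset (Finset.range_subset_range.2 hk) (by
    intro i _ hi
    rw [Finset.mem_range] at hi
    simp [hi])).symm

/-- The convex hull of a nonempty compact subset of `ℝⁿ` is compact (via Carathéodory). -/
lemma isCompact_convexHull_of_isCompact {n : ℕ} {S : Set (Fin n → ℝ)}
    (hSne : S.Nonempty) (hS : IsCompact S) : IsCompact (convexHull ℝ S) := by
  classical
  obtain ⟨s₀, hs₀⟩ := hSne
  let μ : (Fin (n+1) → ℝ) × (Fin (n+1) → (Fin n → ℝ)) → (Fin n → ℝ) :=
    fun p => ∑ i, p.1 i • p.2 i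
  have hμ : Continuous μ := by
    apply continuous_finset_sum
    intro i _
    exact ((continuous_apply i).comp continuous_fst).smul
      ((continuous_apply i).comp continuous_snd)
  have hT : IsCompact ((stdSimplex ℝ (Fin (n+1))) ×ˢ (Set.univ.pi fun _ : Fin (n+1) => S)) :=
    (isCompact_stdSimplex ℝ _).prod (isCompact_univ_pi fun _ => hS)
  have him : convexHull ℝ S =
      μ '' ((stdSimplex ℝ (Fin (n+1))) ×ˢ (Set.univ.pi fun _ : Fin (n+1) => S)) := by
    apply Subset.antisymm
    · intro x hx
      obtain ⟨ι, hι, zf, w, hz, hAI, hwpos, hwsum, hxeq⟩ :=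
        eq_pos_convex_span_of_mem_convexHull hx
      have hcard : Fintype.card ι ≤ n + 1 := by
        cases isEmpty_or_nonempty ι with
        | inl h => simp [Fintype.card_eq_zero]
        | inr h =>
          have h1 := hAI.finrank_vectorSpan_add_one
          have h2 : Module.finrank ℝ (vectorSpan ℝ (Set.range zf)) ≤ n := by
            have := Submodule.finrank_le (vectorSpan ℝ (Set.range zf))
            rwa [Module.finrank_fin_fun] at this
          omega
      set k := Fintype.card ι with hk
      obtain e := (Fintype.equivFin ι).symm
      refine ⟨⟨fun i => if h : (i : ℕ) < k then w (e ⟨i, h⟩) else 0,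
              fun i => if h : (i : ℕ) < k then zf (e ⟨i, h⟩) else s₀⟩, ⟨?_, ?_⟩, ?_⟩
      · constructor
        · intro i
          dsimp only
          split
          · exact (hwpos _).le
          · exact le_refl 0
        · dsimp only
          rw [dite_sum_aux hcard (fun j => w (e j))]
          rw [Equiv.sum_comp e w]
          exact hwsum
      · intro i _
        dsimp only
        split
        · exact hz (Set.mem_range_self _)
        · exact hs₀
      · show (∑ i : Fin (n+1), _) = x
        have hterm : ∀ i : Fin (n+1),
            (if h : (i : ℕ) < k then w (e ⟨i, h⟩) else 0) •
              (if h : (i : ℕ) < k then zf (e ⟨i, h⟩) else s₀) =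
            (if h : (i : ℕ) < k then w (e ⟨i, h⟩) • zf (e ⟨i, h⟩) else 0) := by
          intro i
          split
          · rfl
          · simp
        rw [Finset.sum_congr rfl (fun i _ => hterm i)]
        rw [dite_sum_aux hcard (fun j => w (e j) • zf (e j))]
        rw [Equiv.sum_comp e (fun j => w j • zf j)]
        exact hxeq
    · rintro x ⟨⟨wv, v⟩, ⟨hw, hv⟩, rfl⟩
      exact (convex_convexHull ℝ S).sum_mem (fun i _ => hw.1 i) hw.2
        (fun i _ => subset_convexHull ℝ S (hv i (mem_univ i)))
  rw [him]
  exact hT.image hμ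

lemma slice_convex' {n : ℕ} (I : Set (Fin n)) (yb : Fin n → ℝ) :
    Convex ℝ {x : Fin n → ℝ | ∀ i ∉ I, x i = yb i} := by
  intro x hx y hy a b ha hb hab i hi
  simp only [Pi.add_apply, Pi.smul_apply, smul_eq_mul]
  rw [hx i hi, hy i hi, ← add_mul, hab, one_mul]

lemma convexIn_add_of_outer {n : ℕ} (I : Set (Fin n)) (g φ : (Fin n → ℝ) → ℝ)
    (hg : ConvexOn ℝ Set.univ g)
    (hφ : ∀ x y : Fin n → ℝ, (∀ i ∉ I, x i = y i) → φ x = φ y) :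
    ConvexIn I (fun x => g x + φ x) := by
  intro yb
  refine ⟨slice_convex' I yb, ?_⟩
  intro x hx y hy a b ha hb hab
  have hmem : a • x + b • y ∈ {x : Fin n → ℝ | ∀ i ∉ I, x i = yb i} :=
    slice_convex' I yb hx hy ha hb hab
  have h1 : φ (a • x + b • y) = φ x := hφ _ _ (fun i hi => by rw [hmem i hi, hx i hi])
  have h2 : φ y = φ x := hφ _ _ (fun i hi => by rw [hy i hi, hx i hi])
  have h3 := hg.2 (mem_univ x) (mem_univ y) ha hb hab
  simp only [smul_eq_mul] at h3 ⊢
  rw [h1, h2]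
  have heq : a * (g x + φ x) + b * (g y + φ x) = a * g x + b * g y + φ x := by
    linear_combination (φ x) * hab
  rw [heq]
  linarith

lemma exists_bound_on {n : ℕ} {s : Set (Fin n → ℝ)} (hs : IsCompact s)
    (ℓ : (Fin n → ℝ) →L[ℝ] ℝ) : ∃ B, ∀ x ∈ s, ℓ x ≤ B := by
  obtain ⟨B, hB⟩ := (hs.image ℓ.continuous).bddAbove
  exact ⟨B, fun x hx => hB ⟨x, hx, rfl⟩⟩

/-- If a nonempty compact set `P ⊆ ℝⁿ` shares its supremum with a finite set `Q` for every
function convex in `x_I`, then for every `x̄` in the projection of `P` onto the coordinates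
outside `I` (i.e. every `xb` agreeing outside `I` with some point of `P`), every extreme
point of `conv (P(x̄))` belongs to `Q`, where `P(x̄) = P ∩ {x : xᵢ = x̄ᵢ ∀ i ∉ I}`; in
particular the set of extreme points of `conv (P(x̄))` is finite. -/
theorem stmt_7 {n : ℕ} (P : Set (Fin n → ℝ)) (hPne : P.Nonempty) (hPcomp : IsCompact P)
    (I : Set (Fin n)) (Q : Set (Fin n → ℝ)) (hQfin : Q.Finite)
    (hsup : ∀ f : (Fin n → ℝ) → ℝ, ConvexIn I f → sSup (f '' P) = sSup (f '' Q)) :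
    ∀ xb : Fin n → ℝ, (∃ p ∈ P, ∀ i ∉ I, p i = xb i) →
      (convexHull ℝ {x ∈ P | ∀ i ∉ I, x i = xb i}).extremePoints ℝ ⊆ Q ∧
      ((convexHull ℝ {x ∈ P | ∀ i ∉ I, x i = xb i}).extremePoints ℝ).Finite := by
  classical
  intro xb hxb
  obtain ⟨p, hpP, hp⟩ := hxb
  -- Q is nonempty
  have hQne : Q.Nonempty := by
    by_contra h
    rw [not_nonempty_iff_eq_empty] at h
    have h1 := hsup (fun _ => 1) (fun yb => convexOn_const 1 (slice_convex' I yb))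
    rw [hPne.image_const, h, image_empty, csSup_singleton, Real.sSup_empty] at h1
    exact one_ne_zero h1
  set S : Set (Fin n → ℝ) := {x ∈ P | ∀ i ∉ I, x i = xb i} with hSdef
  have hpS : p ∈ S := ⟨hpP, hp⟩
  have hslc : IsClosed {x : Fin n → ℝ | ∀ i ∉ I, x i = xb i} := by
    have : {x : Fin n → ℝ | ∀ i ∉ I, x i = xb i} =
        ⋂ (i) (_ : i ∉ I), {x : Fin n → ℝ | x i = xb i} := by
      ext x; simp
    rw [this]
    exact isClosed_iInter fun i => isClosed_iInter fun _ =>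
      isClosed_eq (continuous_apply i) continuous_const
  have hScomp : IsCompact S := hPcomp.inter_right hslc
  have hCcomp : IsCompact (convexHull ℝ S) := isCompact_convexHull_of_isCompact ⟨p, hpS⟩ hScomp
  -- the φ-penalty function, convexity, and value facts
  have hφgen : ∀ M : ℝ, ∀ x y : Fin n → ℝ, (∀ i ∉ I, x i = y i) →
      (if ∀ i ∉ I, x i = xb i then (0:ℝ) else -M) =
      (if ∀ i ∉ I, y i = xb i then (0:ℝ) else -M) := by
    intro M x y hxy
    have hiff : (∀ i ∉ I, x i = xb i) ↔ (∀ i ∉ I, y i = xb i) := by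
      constructor
      · intro h i hi; rw [← hxy i hi]; exact h i hi
      · intro h i hi; rw [hxy i hi]; exact h i hi
    exact if_congr hiff rfl rfl
  have hconvℓ : ∀ ℓ : (Fin n → ℝ) →L[ℝ] ℝ, ConvexOn ℝ Set.univ ℓ := by
    intro ℓ
    exact ⟨convex_univ, by
      intro x _ y _ a b ha hb hab
      simp [map_add, map_smul]⟩
  -- Lemma A : points of Q on the slice lie in the convex hull of S
  have hA : ∀ q ∈ Q, (∀ i ∉ I, q i = xb i) → q ∈ convexHull ℝ S := by
    intro q hq hql
    by_contra hqC
    obtain ⟨ℓ, u, hlt, hu⟩ :=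
      geometric_hahn_banach_closed_point (convex_convexHull ℝ S) hCcomp.isClosed hqC
    obtain ⟨BP, hBP⟩ := exists_bound_on hPcomp ℓ
    set M : ℝ := max (BP - u + 1) 0 with hM
    set f : (Fin n → ℝ) → ℝ :=
      fun x => ℓ x + (if ∀ i ∉ I, x i = xb i then (0:ℝ) else -M) with hf
    have hfconv : ConvexIn I f := convexIn_add_of_outer I ℓ _ (hconvℓ ℓ) (hφgen M)
    have key := hsup f hfconv
    have h1 : sSup (f '' P) ≤ u := by
      apply csSup_le (hPne.image f)
      rintro y ⟨x, hx, rfl⟩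
      by_cases hxs : ∀ i ∉ I, x i = xb i
      · have : ℓ x < u := hlt x (subset_convexHull ℝ S ⟨hx, hxs⟩)
        simp only [hf, if_pos hxs]
        linarith
      · have h1 : ℓ x ≤ BP := hBP x hx
        have h2 : BP - u + 1 ≤ M := le_max_left _ _
        simp only [hf, if_neg hxs]
        linarith
    have h2 : u < sSup (f '' Q) := by
      have hfq : f q = ℓ q := by simp [hf, if_pos hql]
      have : f q ≤ sSup (f '' Q) :=
        le_csSup ((hQfin.image f).bddAbove) (mem_image_of_mem f hq)
      rw [hfq] at this
      linarith
    rw [key] at h1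
    linarith
  -- main step
  have hsub : (convexHull ℝ S).extremePoints ℝ ⊆ Q := by
    intro z hz
    by_contra hzQ
    have hzS : z ∈ S := extremePoints_convexHull_subset hz
    have hdiff : Convex ℝ (convexHull ℝ S \ {z}) :=
      ((convex_convexHull ℝ S).mem_extremePoints_iff_convex_diff.mp hz).2
    set Qs : Set (Fin n → ℝ) := {q ∈ Q | ∀ i ∉ I, q i = xb i} with hQs
    have hQsfin : Qs.Finite := hQfin.subset (sep_subset _ _)
    have hKsub : convexHull ℝ Qs ⊆ convexHull ℝ S \ {z} := by
      apply convexHull_min _ hdiff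
      rintro q ⟨hq, hql⟩
      refine ⟨hA q hq hql, ?_⟩
      intro h
      rw [mem_singleton_iff] at h
      subst h
      exact hzQ hq
    have hzK : z ∉ convexHull ℝ Qs := fun h => (hKsub h).2 rfl
    obtain ⟨ℓ, u, hlt, hu⟩ :=
      geometric_hahn_banach_closed_point (convex_convexHull ℝ Qs)
        (hQsfin.isClosed_convexHull ℝ) hzK
    obtain ⟨BQ, hBQ⟩ := exists_bound_on hQfin.isCompact ℓ
    obtain ⟨BP, hBP⟩ := exists_bound_on hPcomp ℓ
    set M : ℝ := max (BQ - u + 1) 0 with hM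
    set f : (Fin n → ℝ) → ℝ :=
      fun x => ℓ x + (if ∀ i ∉ I, x i = xb i then (0:ℝ) else -M) with hf
    have hfconv : ConvexIn I f := convexIn_add_of_outer I ℓ _ (hconvℓ ℓ) (hφgen M)
    have key := hsup f hfconv
    have h1 : u < sSup (f '' P) := by
      have hfz : f z = ℓ z := by simp [hf, if_pos hzS.2]
      have hbdd : BddAbove (f '' P) := by
        refine ⟨BP, ?_⟩
        rintro y ⟨x, hx, rfl⟩
        have h0 : (if ∀ i ∉ I, x i = xb i then (0:ℝ) else -M) ≤ 0 := by
          split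
          · exact le_refl 0
          · simp [hM]
        have := hBP x hx
        simp only [hf]
        linarith
      have : f z ≤ sSup (f '' P) := le_csSup hbdd (mem_image_of_mem f hzS.1)
      rw [hfz] at this
      linarith
    have h2 : sSup (f '' Q) ≤ u := by
      apply csSup_le (hQne.image f)
      rintro y ⟨q, hq, rfl⟩
      by_cases hqs : ∀ i ∉ I, q i = xb i
      · have : ℓ q < u := hlt q (subset_convexHull ℝ Qs ⟨hq, hqs⟩)
        simp only [hf, if_pos hqs]
        linarith
      · have hq1 : ℓ q ≤ BQ := hBQ q hq
        have hq2 : BQ - u + 1 ≤ M := le_max_left _ _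
        simp only [hf, if_neg hqs]
        linarith
    rw [key] at h1
    linarith
  exact ⟨hsub, hQfin.subset hsub⟩
end

section
/- Let P = { (x₁, x₂) ∈ ℝ² : x₁ ∈ [-1, 1], x₂ ∈ {-1, 0, 1}, |x₁| ≤ |x₂| }. Then the set of extreme points of conv(P) is exactly { (-1,-1), (-1,1), (1,-1), (1,1) }, and for the function f(x₁, x₂) = -x₂², which is convex in x₁ (it is constant in x₁ for each fixed x₂), one has sup { f(x) : x ∈ P } = 0 while sup { f(x) : x is an extreme point of conv(P) } = -1; in particular the two suprema differ. -/
open Set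

/-- The set `P = {(x₁, x₂) : x₁ ∈ [-1,1], x₂ ∈ {-1,0,1}, |x₁| ≤ |x₂|}`. -/
def P9 : Set (Fin 2 → ℝ) :=
  {x | x 0 ∈ Icc (-1 : ℝ) 1 ∧ (x 1 = -1 ∨ x 1 = 0 ∨ x 1 = 1) ∧ |x 0| ≤ |x 1|}

/-- The function `f (x₁, x₂) = -x₂²`. -/
def f9 : (Fin 2 → ℝ) → ℝ := fun x => -(x 1) ^ 2

lemma extremePoints_Icc_neg_one_one :
    (Icc (-1 : ℝ) 1).extremePoints ℝ = {-1, 1} := by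
  ext x
  constructor
  · rintro ⟨⟨h1, h2⟩, h⟩
    by_contra hx
    simp only [mem_insert_iff, mem_singleton_iff] at hx
    push_neg at hx
    have h1' : -1 < x := lt_of_le_of_ne h1 (Ne.symm hx.1)
    have h2' : x < 1 := lt_of_le_of_ne h2 hx.2
    have := h (x₁ := -1) (by constructor <;> norm_num)
      (x₂ := 1) (by constructor <;> norm_num)
      ⟨(1 - x) / 2, (1 + x) / 2, by linarith, by linarith, by ring,
        by simp [smul_eq_mul]; ring⟩
    exact hx.1 this.symm
  · intro hx
    simp only [mem_insert_iff, mem_singleton_iff] at hx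
    refine ⟨by rcases hx with rfl | rfl <;> constructor <;> norm_num, ?_⟩
    intro x₁ hx₁ x₂ hx₂ hseg
    obtain ⟨a, b, ha, hb, hab, heq⟩ := hseg
    simp only [smul_eq_mul] at heq
    rcases hx with rfl | rfl
    · have key : a * (x₁ + 1) + b * (x₂ + 1) = 0 := by linarith
      have k1 : 0 ≤ a * (x₁ + 1) := mul_nonneg ha.le (by linarith [hx₁.1])
      have k2 : 0 ≤ b * (x₂ + 1) := mul_nonneg hb.le (by linarith [hx₂.1])
      have e1 : a * (x₁ + 1) = 0 := by linarith
      have e2 : b * (x₂ + 1) = 0 := by linarith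
      have := (mul_eq_zero.1 e1).resolve_left (ne_of_gt ha); linarith
    · have key : a * (1 - x₁) + b * (1 - x₂) = 0 := by linarith
      have k1 : 0 ≤ a * (1 - x₁) := mul_nonneg ha.le (by linarith [hx₁.2])
      have k2 : 0 ≤ b * (1 - x₂) := mul_nonneg hb.le (by linarith [hx₂.2])
      have e1 : a * (1 - x₁) = 0 := by linarith
      have e2 : b * (1 - x₂) = 0 := by linarith
      have := (mul_eq_zero.1 e1).resolve_left (ne_of_gt ha); linarith

lemma corners_subset_P9 :
    (univ.pi fun _ : Fin 2 => ({-1, 1} : Set ℝ)) ⊆ P9 := by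
  intro x hx
  have h0 := hx 0 (mem_univ _)
  have h1 := hx 1 (mem_univ _)
  simp only [mem_insert_iff, mem_singleton_iff] at h0 h1
  refine ⟨?_, ?_, ?_⟩
  · rcases h0 with h | h <;> rw [h] <;> constructor <;> norm_num
  · rcases h1 with h | h
    · left; exact h
    · right; right; exact h
  · rcases h0 with h | h <;> rcases h1 with h' | h' <;> rw [h, h'] <;> norm_num

lemma convexHull_P9 :
    convexHull ℝ P9 = univ.pi fun _ : Fin 2 => Icc (-1 : ℝ) 1 := by
  apply subset_antisymm
  · apply convexHull_min
    · intro x hx i _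
      fin_cases i
      · exact hx.1
      · show x 1 ∈ Icc (-1 : ℝ) 1
        rcases hx.2.1 with h | h | h <;> rw [h] <;> constructor <;> norm_num
    · exact convex_pi fun i _ => convex_Icc _ _
  · have : (univ.pi fun _ : Fin 2 => Icc (-1 : ℝ) 1)
        = convexHull ℝ (univ.pi fun _ : Fin 2 => ({-1, 1} : Set ℝ)) := by
      rw [convexHull_pi]
      congr! with _ _
      rw [convexHull_pair, segment_eq_Icc (by norm_num : (-1 : ℝ) ≤ 1)]
    rw [this]
    exact convexHull_mono corners_subset_P9

lemma exPts_P9 :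
    exPts P9 = ({![-1, -1], ![-1, 1], ![1, -1], ![1, 1]} : Set (Fin 2 → ℝ)) := by
  unfold exPts
  rw [convexHull_P9, extremePoints_pi]
  ext x
  simp only [mem_pi, mem_univ, true_imp_iff, extremePoints_Icc_neg_one_one,
    mem_insert_iff, mem_singleton_iff]
  constructor
  · intro h
    have h0 := h 0
    have h1 := h 1
    have hx : x = ![x 0, x 1] := by
      funext i; fin_cases i <;> rfl
    rcases h0 with h0 | h0 <;> rcases h1 with h1 | h1 <;>
      rw [hx, h0, h1] <;> simp
  · intro h i
    rcases h with rfl | rfl | rfl | rfl <;> fin_cases i <;> simp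

lemma convexIn_f9 : ConvexIn ({0} : Set (Fin 2)) f9 := by
  intro xb
  have hmem : ∀ x : Fin 2 → ℝ, (∀ i ∉ ({0} : Set (Fin 2)), x i = xb i) → x 1 = xb 1 := by
    intro x hx
    exact hx 1 (by simp)
  constructor
  · intro x hx y hy a b ha hb hab i hi
    simp only [Pi.add_apply, Pi.smul_apply, smul_eq_mul]
    rw [hx i hi, hy i hi, ← add_mul, hab, one_mul]
  · intro x hx y hy a b ha hb hab
    have h1 := hmem x hx
    have h2 := hmem y hy
    simp only [f9, Pi.add_apply, Pi.smul_apply, smul_eq_mul, h1, h2]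
    have : a * xb 1 + b * xb 1 = xb 1 := by rw [← add_mul, hab, one_mul]
    rw [this]
    nlinarith [sq_nonneg (xb 1)]

lemma sSup_f9_P9 : sSup (f9 '' P9) = 0 := by
  apply IsGreatest.csSup_eq
  constructor
  · refine ⟨fun _ => 0, ⟨by constructor <;> norm_num, by norm_num, by norm_num⟩, by simp [f9]⟩
  · rintro y ⟨x, _, rfl⟩
    simp only [f9]
    nlinarith [sq_nonneg (x 1)]

lemma sSup_f9_exPts : sSup (f9 '' exPts P9) = -1 := by
  rw [exPts_P9]
  apply IsGreatest.csSup_eq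
  constructor
  · exact ⟨![1, 1], by simp, by norm_num [f9]⟩
  · rintro y ⟨x, hx, rfl⟩
    rcases hx with rfl | rfl | rfl | rfl <;> norm_num [f9]

/-- The extreme points of `conv P9` are exactly the four points `(±1, ±1)`; the function
`f9 = -x₂²` is convex in `x₁` (the coordinate `0`), yet its supremum over `P9` is `0` while
its supremum over the extreme points is `-1`; in particular the two suprema differ. -/
theorem stmt_9 :
    exPts P9 = ({![-1, -1], ![-1, 1], ![1, -1], ![1, 1]} : Set (Fin 2 → ℝ)) ∧
    ConvexIn ({0} : Set (Fin 2)) f9 ∧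
    sSup (f9 '' P9) = 0 ∧
    sSup (f9 '' exPts P9) = -1 ∧
    sSup (f9 '' P9) ≠ sSup (f9 '' exPts P9) := by
  refine ⟨exPts_P9, convexIn_f9, sSup_f9_P9, sSup_f9_exPts, ?_⟩
  rw [sSup_f9_P9, sSup_f9_exPts]
  norm_num
end

section
/- Let P = { (x₁, x₂, x₃) ∈ ℝ³ : (x₁, x₂) ∈ [0,2]², x₃ ∈ {0,1}, x₁ + x₂ ≤ 3, x₃ - x₁ ≤ 0, x₁ - x₃ ≤ 1 }. Let R = ([0,1] × [0,2] × {0}) ∪ ({1} × [0,2] × {1}) ∪ ({2} × [0,1] × {1}). Then for every function f : ℝ³ → ℝ that is convex in (x₁, x₂) (i.e., for every fixed x₃ ∈ ℝ the map (x₁, x₂) ↦ f(x₁, x₂, x₃) is convex), sup { f(x) : x ∈ P } = sup { f(x) : x ∈ R }. -/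
open Set

/-- The set `P` of Example 1: `{(x₁,x₂,x₃) ∈ [0,2]² × {0,1} : x₁ + x₂ ≤ 3, x₃ - x₁ ≤ 0,
x₁ - x₃ ≤ 1}`. -/
def P10 : Set (Fin 3 → ℝ) :=
  {x | x 0 ∈ Icc (0 : ℝ) 2 ∧ x 1 ∈ Icc (0 : ℝ) 2 ∧ (x 2 = 0 ∨ x 2 = 1) ∧
    x 0 + x 1 ≤ 3 ∧ x 2 - x 0 ≤ 0 ∧ x 0 - x 2 ≤ 1}

/-- The union of hyper-rectangles
`R = ([0,1] × [0,2] × {0}) ∪ ({1} × [0,2] × {1}) ∪ ({2} × [0,1] × {1})`. -/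
def R10 : Set (Fin 3 → ℝ) :=
  {x | x 0 ∈ Icc (0 : ℝ) 1 ∧ x 1 ∈ Icc (0 : ℝ) 2 ∧ x 2 = 0} ∪
  {x | x 0 = 1 ∧ x 1 ∈ Icc (0 : ℝ) 2 ∧ x 2 = 1} ∪
  {x | x 0 = 2 ∧ x 1 ∈ Icc (0 : ℝ) 1 ∧ x 2 = 1}

lemma key10 (f : (Fin 3 → ℝ) → ℝ)
    (hf : ∀ c : ℝ, ConvexOn ℝ univ fun p : ℝ × ℝ => f ![p.1, p.2, c])
    {c A B x1 y1 x2 y2 a b : ℝ} (ha : 0 ≤ a) (hb : 0 ≤ b) (hab : a + b = 1)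
    (hA : A = a * x1 + b * x2) (hB : B = a * y1 + b * y2) :
    f ![A, B, c] ≤ max (f ![x1, y1, c]) (f ![x2, y2, c]) := by
  subst hA hB
  have := (hf c).le_on_segment' (x := (x1, y1)) (y := (x2, y2))
    (mem_univ _) (mem_univ _) ha hb hab
  simpa [Prod.smul_mk, smul_eq_mul] using this

lemma hvec10 (x : Fin 3 → ℝ) : x = ![x 0, x 1, x 2] := by
  funext i; fin_cases i <;> rfl

-- For x ∈ P10 with x 2 = 1, f x ≤ max of two R-points
lemma slice1_bound (f : (Fin 3 → ℝ) → ℝ)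
    (hf : ∀ c : ℝ, ConvexOn ℝ univ fun p : ℝ × ℝ => f ![p.1, p.2, c])
    {a b : ℝ} (ha1 : 1 ≤ a) (ha2 : a ≤ 2) (hb0 : 0 ≤ b) (hab : a + b ≤ 3) :
    ∃ s : ℝ, 0 ≤ s ∧ s ≤ 1 ∧
      f ![a, b, 1] ≤ max (f ![1, 2 * s, 1]) (f ![2, s, 1]) := by
  have h3a : (0:ℝ) < 3 - a := by linarith
  refine ⟨b / (3 - a), div_nonneg hb0 h3a.le, ?_, ?_⟩
  · rw [div_le_one h3a]; linarith
  · refine key10 f hf (a := 2 - a) (b := a - 1) (by linarith) (by linarith) (by ring) ?_ ?_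
    · ring
    · field_simp
      ring


/-- For every `f : ℝ³ → ℝ` that is convex in `(x₁, x₂)` (for every fixed `x₃ = c` the map
`(x₁, x₂) ↦ f (x₁, x₂, c)` is convex), the supremum of `f` over `P10` equals its supremum
over the union of rectangles `R10`. -/
theorem stmt_10 (f : (Fin 3 → ℝ) → ℝ)
    (hf : ∀ c : ℝ, ConvexOn ℝ univ fun p : ℝ × ℝ => f ![p.1, p.2, c]) :
    sSup (f '' P10) = sSup (f '' R10) := by
  -- global bound M
  set M : ℝ := max (max (max (f ![0,0,0]) (f ![1,0,0])) (max (f ![0,2,0]) (f ![1,2,0])))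
      (max (max (f ![1,0,1]) (f ![1,2,1])) (max (f ![2,0,1]) (f ![2,1,1]))) with hM
  have hboundP : ∀ x ∈ P10, f x ≤ M := by
    rintro x ⟨⟨h00, h02⟩, ⟨h10, h12⟩, h2, hsum, hc1, hc2⟩
    rw [hvec10 x]
    rcases h2 with h2 | h2 <;> rw [h2]
    · -- slice 0 : x 0 ∈ [0,1], bound on the square
      have hx01 : x 0 ≤ 1 := by linarith
      have step1 : f ![x 0, x 1, 0] ≤ max (f ![x 0, 0, 0]) (f ![x 0, 2, 0]) :=
        key10 f hf (a := 1 - x 1 / 2) (b := x 1 / 2) (by linarith) (by linarith)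
          (by ring) (by ring) (by ring)
      have step2 : f ![x 0, 0, 0] ≤ max (f ![0,0,0]) (f ![1,0,0]) :=
        key10 f hf (a := 1 - x 0) (b := x 0) (by linarith) (by linarith)
          (by ring) (by ring) (by ring)
      have step3 : f ![x 0, 2, 0] ≤ max (f ![0,2,0]) (f ![1,2,0]) :=
        key10 f hf (a := 1 - x 0) (b := x 0) (by linarith) (by linarith)
          (by ring) (by ring) (by ring)
      have := le_trans step1 (max_le_max step2 step3)
      calc f ![x 0, x 1, 0] ≤ _ := this
        _ ≤ M := le_max_left _ _
    · -- slice 1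
      have ha1 : 1 ≤ x 0 := by linarith
      obtain ⟨s, hs0, hs1, hle⟩ := slice1_bound f hf ha1 h02 h10 hsum
      have step2 : f ![1, 2 * s, 1] ≤ max (f ![1,0,1]) (f ![1,2,1]) :=
        key10 f hf (a := 1 - s) (b := s) (by linarith) hs0 (by ring) (by ring) (by ring)
      have step3 : f ![2, s, 1] ≤ max (f ![2,0,1]) (f ![2,1,1]) :=
        key10 f hf (a := 1 - s) (b := s) (by linarith) hs0 (by ring) (by ring) (by ring)
      have := le_trans hle (max_le_max step2 step3)
      calc f ![x 0, x 1, 1] ≤ _ := this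
        _ ≤ M := le_max_right _ _
  have hRP : R10 ⊆ P10 := by
    rintro x ((⟨⟨h00,h01⟩,⟨h10,h12⟩,h2⟩ | ⟨h0,⟨h10,h12⟩,h2⟩) | ⟨h0,⟨h10,h11⟩,h2⟩) <;>
      refine ⟨⟨by linarith, by linarith⟩, ⟨by linarith, by linarith⟩, ?_, by linarith,
        by linarith, by linarith⟩
    · exact Or.inl h2
    · exact Or.inr h2
    · exact Or.inr h2
  have hPne : (f '' P10).Nonempty := by
    refine ⟨f ![0,0,0], ![0,0,0], ?_, rfl⟩
    refine ⟨?_, ?_, Or.inl ?_, ?_, ?_, ?_⟩ <;> norm_num [Matrix.cons_val_two, Matrix.tail_cons, Matrix.head_cons]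
  have hRne : (f '' R10).Nonempty := by
    refine ⟨f ![0,0,0], ![0,0,0], Or.inl (Or.inl ⟨⟨?_, ?_⟩, ⟨?_, ?_⟩, ?_⟩), rfl⟩ <;> norm_num [Matrix.cons_val_two, Matrix.tail_cons, Matrix.head_cons]
  have bddP : BddAbove (f '' P10) := by
    refine ⟨M, ?_⟩; rintro y ⟨x, hx, rfl⟩; exact hboundP x hx
  have bddR : BddAbove (f '' R10) := bddP.mono (image_mono hRP)
  apply le_antisymm
  · refine csSup_le hPne ?_
    rintro y ⟨x, hx, rfl⟩
    obtain ⟨⟨h00, h02⟩, ⟨h10, h12⟩, h2, hsum, hc1, hc2⟩ := hx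
    rcases h2 with h2 | h2
    · -- x ∈ R10 directly
      refine le_csSup bddR ⟨x, Or.inl (Or.inl ⟨⟨h00, by linarith⟩, ⟨h10, h12⟩, h2⟩), rfl⟩
    · have ha1 : 1 ≤ x 0 := by linarith
      obtain ⟨s, hs0, hs1, hle⟩ := slice1_bound f hf ha1 h02 h10 hsum
      have hr1 : f ![1, 2 * s, 1] ≤ sSup (f '' R10) := by
        refine le_csSup bddR ⟨![1, 2 * s, 1], Or.inl (Or.inr ?_), rfl⟩
        refine ⟨by norm_num, ?_, by norm_num [Matrix.cons_val_two, Matrix.tail_cons, Matrix.head_cons]⟩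
        simp only [Matrix.cons_val_one, Matrix.head_cons, mem_Icc, Matrix.cons_val]
        constructor <;> linarith
      have hr2 : f ![2, s, 1] ≤ sSup (f '' R10) := by
        refine le_csSup bddR ⟨![2, s, 1], Or.inr ?_, rfl⟩
        exact ⟨by norm_num, ⟨hs0, hs1⟩, by norm_num [Matrix.cons_val_two, Matrix.tail_cons, Matrix.head_cons]⟩
      calc f x = f ![x 0, x 1, x 2] := by rw [← hvec10 x]
        _ = f ![x 0, x 1, 1] := by rw [h2]
        _ ≤ max (f ![1, 2*s, 1]) (f ![2, s, 1]) := hle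
        _ ≤ sSup (f '' R10) := max_le hr1 hr2
  · refine csSup_le hRne ?_
    rintro y ⟨x, hx, rfl⟩
    exact le_csSup bddP ⟨x, hRP hx, rfl⟩
end

section
/- Fix finite index sets N = {1,…,n} (generating units) and T = {1,…,T} (time periods) and, for each i ∈ N, parameters SU^i, RU^i, SD^i, RD^i, m^i, M^i ∈ ℝ with 0 ≤ SU^i ≤ RU^i, 0 ≤ SD^i ≤ RD^i, 0 ≤ m^i ≤ M^i, integers L^i, ℓ^i ≥ 1, start-up costs K^i_k ∈ ℝ, demands D_j and reserves R_j. Let the variables be x^i_j, y^i_j, ȳ^i_j ∈ {0,1} and q^i_j, p^i_j, p̄^i_j ≥ 0 for i ∈ N, j ∈ T, with the boundary convention x^i_0 = 0 and p^i_0 = 0. Let E be the set of all such variable tuples satisfying: (start-up cost) q^i_j ≥ K^i_k (x^i_j - Σ_{h=1}^{k} x^i_{j-h}) for all 1 ≤ k ≤ j-1, j ∈ T, i ∈ N; (logical) y^i_j - ȳ^i_j = x^i_j - x^i_{j-1}; (minimum up) Σ_{j'=max(1, j-L^i+1)}^{j} y^i_{j'} ≤ x^i_j for all j ∈ T; (minimum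 down) Σ_{j'=max(1, j-ℓ^i+1)}^{j} ȳ^i_{j'} ≤ 1 - x^i_j for all j ∈ T; (ramp-up) p^i_j - p^i_{j-1} ≤ RU^i x^i_{j-1} + SU^i y^i_j; (ramp-down) p^i_{j-1} - p^i_j ≤ RD^i x^i_j + SD^i ȳ^i_j; (capacity) m^i x^i_j ≤ p^i_j ≤ p̄^i_j ≤ M^i x^i_j; (demand) Σ_{i∈N} p^i_j ≥ D_j; and (reserve) Σ_{i∈N} p̄^i_j ≥ D_j + R_j. Let G be defined identically except that the ramp-up and ramp-down constraints are replaced by p^i_j - p^i_{j-1} ≤ (RU^i - SU^i) x^i_{j-1} + SU^i x^i_j and p^i_{j-1} - p^i_j ≤ (RD^i - SD^i) x^i_j + SD^i x^i_{j-1}. Then E = G. -/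
open Finset

/-- A tuple of unit-commitment variables for `n` generating units, indexed by time
`j ∈ ℕ` (time periods are `1, …, T`; index `0` is the boundary convention). -/
structure UCSol (n : ℕ) where
  /-- commitment (on/off) indicators -/
  x : Fin n → ℕ → ℝ
  /-- start-up indicators -/
  y : Fin n → ℕ → ℝ
  /-- shut-down indicators -/
  yb : Fin n → ℕ → ℝ
  /-- linearized start-up costs -/
  q : Fin n → ℕ → ℝ
  /-- power outputs -/
  p : Fin n → ℕ → ℝ
  /-- maximum available power -/
  pb : Fin n → ℕ → ℝ

/-- The constraints of the unit commitment problem common to both formulations: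
boundary convention, binary and nonnegativity domains, start-up cost, logical,
minimum up/down time, capacity, demand and reserve constraints. -/
def UCCommon (n T : ℕ) (K : Fin n → ℕ → ℝ) (L ℓ : Fin n → ℕ) (m M : Fin n → ℝ)
    (D R : ℕ → ℝ) (v : UCSol n) : Prop :=
  (∀ i, v.x i 0 = 0) ∧ (∀ i, v.p i 0 = 0) ∧
  (∀ i, ∀ j ∈ Icc 1 T,
    (v.x i j = 0 ∨ v.x i j = 1) ∧ (v.y i j = 0 ∨ v.y i j = 1) ∧
    (v.yb i j = 0 ∨ v.yb i j = 1) ∧ 0 ≤ v.q i j ∧ 0 ≤ v.p i j ∧ 0 ≤ v.pb i j) ∧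
  (∀ i, ∀ j ∈ Icc 1 T, ∀ k ∈ Icc 1 (j - 1),
    v.q i j ≥ K i k * (v.x i j - ∑ h ∈ Icc 1 k, v.x i (j - h))) ∧
  (∀ i, ∀ j ∈ Icc 1 T, v.y i j - v.yb i j = v.x i j - v.x i (j - 1)) ∧
  (∀ i, ∀ j ∈ Icc 1 T, ∑ j' ∈ Icc (j - L i + 1) j, v.y i j' ≤ v.x i j) ∧
  (∀ i, ∀ j ∈ Icc 1 T, ∑ j' ∈ Icc (j - ℓ i + 1) j, v.yb i j' ≤ 1 - v.x i j) ∧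
  (∀ i, ∀ j ∈ Icc 1 T,
    m i * v.x i j ≤ v.p i j ∧ v.p i j ≤ v.pb i j ∧ v.pb i j ≤ M i * v.x i j) ∧
  (∀ j ∈ Icc 1 T, ∑ i, v.p i j ≥ D j) ∧
  (∀ j ∈ Icc 1 T, ∑ i, v.pb i j ≥ D j + R j)

/-- The original ramp-up and ramp-down constraints. -/
def UCRampOrig (n T : ℕ) (SU RU SD RD : Fin n → ℝ) (v : UCSol n) : Prop :=
  ∀ i, ∀ j ∈ Icc 1 T,
    v.p i j - v.p i (j - 1) ≤ RU i * v.x i (j - 1) + SU i * v.y i j ∧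
    v.p i (j - 1) - v.p i j ≤ RD i * v.x i j + SD i * v.yb i j

/-- The substituted ramp-up and ramp-down constraints (no start-up/shut-down variables). -/
def UCRampSubst (n T : ℕ) (SU RU SD RD : Fin n → ℝ) (v : UCSol n) : Prop :=
  ∀ i, ∀ j ∈ Icc 1 T,
    v.p i j - v.p i (j - 1) ≤ (RU i - SU i) * v.x i (j - 1) + SU i * v.x i j ∧
    v.p i (j - 1) - v.p i j ≤ (RD i - SD i) * v.x i j + SD i * v.x i (j - 1)

/-!
Given the logical constraint `y - ȳ = x_j - x_{j-1}`, the original ramp-up bound equals the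
substituted one plus `SU · ȳ`. If `ȳ = 0` the two bounds coincide; if `ȳ = 1` the unit is off
at time `j`, so `p_j = 0`, the ramp-up left-hand side is `≤ 0` and both bounds are `≥ 0`. The
minimum-down constraint is what rules out `ȳ = 1` while `x_j = 1`. Ramp-down is the same
statement with time reversed, which exchanges start-ups and shut-downs.
-/

section RampBound

variable {α : Type*} [CommRing α] [LinearOrder α] [IsStrictOrderedRing α]

theorem nonneg_of_eq_zero_or_eq_one {a : α} (h : a = 0 ∨ a = 1) : 0 ≤ a := by
  rcases h with rfl | rfl <;> norm_num

theorem sub_le_rampUp_iff {S Rt M p p' x x' y yb : α} (hS : 0 ≤ S) (hSR : S ≤ Rt)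
    (hyb : yb = 0 ∨ yb = 1) (hx : 0 ≤ x) (hx' : 0 ≤ x') (hybx : yb ≤ 1 - x)
    (hlog : y - yb = x - x') (hp : p ≤ M * x) (hp' : 0 ≤ p') :
    p - p' ≤ Rt * x' + S * y ↔ p - p' ≤ (Rt - S) * x' + S * x := by
  have hbound : Rt * x' + S * y = (Rt - S) * x' + S * x + S * yb := by
    linear_combination S * hlog
  rw [hbound]
  rcases hyb with rfl | rfl
  · simp
  · obtain rfl : x = 0 := by linarith
    have hp0 : p ≤ 0 := by simpa using hp
    have hsubst : 0 ≤ (Rt - S) * x' := mul_nonneg (by linarith) hx'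
    constructor <;> intro <;> linarith

end RampBound

namespace UCCommon

variable {n T : ℕ} {K : Fin n → ℕ → ℝ} {L ℓ : Fin n → ℕ} {m M : Fin n → ℝ} {D R : ℕ → ℝ}
  {v : UCSol n}

theorem x_nonneg (hc : UCCommon n T K L ℓ m M D R v) (i : Fin n) {j : ℕ} (hj : j ≤ T) :
    0 ≤ v.x i j := by
  obtain ⟨hx0, -, hdom, -⟩ := hc
  rcases Nat.eq_zero_or_pos j with rfl | hj0
  · exact (hx0 i).ge
  · exact nonneg_of_eq_zero_or_eq_one (hdom i j (mem_Icc.2 ⟨hj0, hj⟩)).1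

theorem p_nonneg (hc : UCCommon n T K L ℓ m M D R v) (i : Fin n) {j : ℕ} (hj : j ≤ T) :
    0 ≤ v.p i j := by
  obtain ⟨-, hp0, hdom, -⟩ := hc
  rcases Nat.eq_zero_or_pos j with rfl | hj0
  · exact (hp0 i).ge
  · exact (hdom i j (mem_Icc.2 ⟨hj0, hj⟩)).2.2.2.2.1

theorem p_le_mul_x (hc : UCCommon n T K L ℓ m M D R v) (i : Fin n) {j : ℕ} (hj : j ≤ T) :
    v.p i j ≤ M i * v.x i j := by
  obtain ⟨hx0, hp0, -, -, -, -, -, hcap, -⟩ := hc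
  rcases Nat.eq_zero_or_pos j with rfl | hj0
  · simp [hx0 i, hp0 i]
  · obtain ⟨-, hppb, hpbM⟩ := hcap i j (mem_Icc.2 ⟨hj0, hj⟩)
    exact hppb.trans hpbM

theorem y_le_x (hc : UCCommon n T K L ℓ m M D R v) {i : Fin n} (hL : 1 ≤ L i) {j : ℕ}
    (hj : j ∈ Icc 1 T) : v.y i j ≤ v.x i j := by
  obtain ⟨-, -, hdom, -, -, hup, -⟩ := hc
  have hj1 := (mem_Icc.1 hj).1
  refine le_trans (single_le_sum (fun k hk => ?_) (right_mem_Icc.2 (by omega))) (hup i j hj)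
  have hk := mem_Icc.1 hk
  exact nonneg_of_eq_zero_or_eq_one
    (hdom i k (mem_Icc.2 ⟨by omega, hk.2.trans (mem_Icc.1 hj).2⟩)).2.1

theorem yb_le_one_sub_x (hc : UCCommon n T K L ℓ m M D R v) {i : Fin n} (hℓ : 1 ≤ ℓ i) {j : ℕ}
    (hj : j ∈ Icc 1 T) : v.yb i j ≤ 1 - v.x i j := by
  obtain ⟨-, -, hdom, -, -, -, hdown, -⟩ := hc
  have hj1 := (mem_Icc.1 hj).1
  refine le_trans (single_le_sum (fun k hk => ?_) (right_mem_Icc.2 (by omega))) (hdown i j hj)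
  have hk := mem_Icc.1 hk
  exact nonneg_of_eq_zero_or_eq_one
    (hdom i k (mem_Icc.2 ⟨by omega, hk.2.trans (mem_Icc.1 hj).2⟩)).2.2.1

theorem rampUp_iff (hc : UCCommon n T K L ℓ m M D R v) {SU RU : Fin n → ℝ} {i : Fin n}
    (hSU : 0 ≤ SU i) (hSURU : SU i ≤ RU i) (hℓ : 1 ≤ ℓ i) {j : ℕ} (hj : j ∈ Icc 1 T) :
    v.p i j - v.p i (j - 1) ≤ RU i * v.x i (j - 1) + SU i * v.y i j ↔
      v.p i j - v.p i (j - 1) ≤ (RU i - SU i) * v.x i (j - 1) + SU i * v.x i j := by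
  have hjT := (mem_Icc.1 hj).2
  have hyb_binary := (hc.2.2.1 i j hj).2.2.1
  have hlog := hc.2.2.2.2.1 i j hj
  exact sub_le_rampUp_iff hSU hSURU hyb_binary (hc.x_nonneg i hjT) (hc.x_nonneg i (by omega))
    (hc.yb_le_one_sub_x hℓ hj) hlog (hc.p_le_mul_x i hjT) (hc.p_nonneg i (by omega))

theorem rampDown_iff (hc : UCCommon n T K L ℓ m M D R v) {SD RD : Fin n → ℝ} {i : Fin n}
    (hSD : 0 ≤ SD i) (hSDRD : SD i ≤ RD i) (hL : 1 ≤ L i) (hℓ : 1 ≤ ℓ i) {j : ℕ}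
    (hj : j ∈ Icc 1 T) :
    v.p i (j - 1) - v.p i j ≤ RD i * v.x i j + SD i * v.yb i j ↔
      v.p i (j - 1) - v.p i j ≤ (RD i - SD i) * v.x i j + SD i * v.x i (j - 1) := by
  have hjT := (mem_Icc.1 hj).2
  have hy_binary := (hc.2.2.1 i j hj).2.1
  have hlog := hc.2.2.2.2.1 i j hj
  have hyx := hc.y_le_x hL hj
  have hybx := hc.yb_le_one_sub_x hℓ hj
  exact sub_le_rampUp_iff hSD hSDRD hy_binary (hc.x_nonneg i (by omega))
    (hc.x_nonneg i hjT) (by linarith) (by linarith) (hc.p_le_mul_x i (by omega))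
    (hc.p_nonneg i hjT)

end UCCommon

theorem stmt_13_general (n T : ℕ) (SU RU SD RD m M : Fin n → ℝ) (L ℓ : Fin n → ℕ)
    (K : Fin n → ℕ → ℝ) (D R : ℕ → ℝ)
    (hSU0 : ∀ i, 0 ≤ SU i) (hSURU : ∀ i, SU i ≤ RU i)
    (hSD0 : ∀ i, 0 ≤ SD i) (hSDRD : ∀ i, SD i ≤ RD i)
    (hL : ∀ i, 1 ≤ L i) (hℓ : ∀ i, 1 ≤ ℓ i) :
    {v : UCSol n | UCCommon n T K L ℓ m M D R v ∧ UCRampOrig n T SU RU SD RD v} =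
    {v : UCSol n | UCCommon n T K L ℓ m M D R v ∧ UCRampSubst n T SU RU SD RD v} := by
  ext v
  refine and_congr_right fun hc => forall_congr' fun i => forall₂_congr fun j hj => ?_
  exact and_congr (hc.rampUp_iff (hSU0 i) (hSURU i) (hℓ i) hj)
    (hc.rampDown_iff (hSD0 i) (hSDRD i) (hL i) (hℓ i) hj)

/-- Proposition 4: under the standard rate assumptions `0 ≤ SUⁱ ≤ RUⁱ`, `0 ≤ SDⁱ ≤ RDⁱ`
and `0 ≤ mⁱ ≤ Mⁱ`, the feasible region `E` of the unit commitment problem with the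
original ramp constraints equals the feasible region `G` with the substituted ramp
constraints. -/
theorem stmt_13 (n T : ℕ) (SU RU SD RD m M : Fin n → ℝ) (L ℓ : Fin n → ℕ)
    (K : Fin n → ℕ → ℝ) (D R : ℕ → ℝ)
    (hSU0 : ∀ i, 0 ≤ SU i) (hSURU : ∀ i, SU i ≤ RU i)
    (hSD0 : ∀ i, 0 ≤ SD i) (hSDRD : ∀ i, SD i ≤ RD i)
    (hm0 : ∀ i, 0 ≤ m i) (hmM : ∀ i, m i ≤ M i)
    (hL : ∀ i, 1 ≤ L i) (hℓ : ∀ i, 1 ≤ ℓ i) :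
    {v : UCSol n | UCCommon n T K L ℓ m M D R v ∧ UCRampOrig n T SU RU SD RD v} =
    {v : UCSol n | UCCommon n T K L ℓ m M D R v ∧ UCRampSubst n T SU RU SD RD v} :=
  stmt_13_general n T SU RU SD RD m M L ℓ K D R hSU0 hSURU hSD0 hSDRD hL hℓ
end
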